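/- Let p < 0 and λ > 0 with λ² > p·‖b‖₂²/(p − 2), let A ∈ ℝ^{m×n} have spectral norm ‖A‖ < 1, and let the IPS sequence be initialized with x⁰ = 0. Then the sequence {x^k} is bounded; in particular there is a t > 0, independent of k, with ‖x^k‖_∞ < t for all k ≥ 1. -/

import Mathlib

open MeasureTheory Filter
open scoped BigOperators

noncomputable section

/-- `l0 w` is the number of nonzero entries of `w`. -/
def l0 {n : ℕ} (w : Fin n → ℝ) : ℕ := (Finset.univ.filter fun i => w i ≠ 0).card

/-- Euclidean (`ℓ²`) norm of a vector. -/
def l2 {k : ℕ} (v : Fin k → ℝ) : ℝ := Real.sqrt (∑ i, v i ^ 2)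

/-- Restriction `h_T` of a vector to a finset `T` (zero outside `T`). -/
def restr {n : ℕ} (T : Finset (Fin n)) (h : Fin n → ℝ) : Fin n → ℝ :=
  fun i => if i ∈ T then h i else 0

/-- Unique Representation Property: every `m` columns of `A` are linearly independent. -/
def URP {m n : ℕ} (A : Matrix (Fin m) (Fin n) ℝ) : Prop :=
  ∀ S : Finset (Fin n), S.card = m →
    LinearIndependent ℝ (fun j : S => (fun i : Fin m => A i (j : Fin n)))

/-- Conditions (I)-(II) on the penalty component `g`. -/
def PenaltyConds (g : ℝ → ℝ) : Prop :=
  g 0 = 0 ∧ (∀ w, g (-w) = g w) ∧ Continuous g ∧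
    ((StrictMonoOn g (Set.Ioi 0) ∧ StrictConcaveOn ℝ (Set.Ioi 0) g) ∨
      (∃ γ : ℝ, 0 < γ ∧ StrictMonoOn g (Set.Ioc 0 γ) ∧
        StrictConcaveOn ℝ (Set.Ioc 0 γ) g ∧ ∀ w, γ ≤ w → g w = g γ))

/-- Spectral (`ℓ² → ℓ²` operator) norm of a matrix. -/
def specNorm {m n : ℕ} (A : Matrix (Fin m) (Fin n) ℝ) : ℝ :=
  sSup {c | ∃ v : Fin n → ℝ, l2 v ≤ 1 ∧ c = l2 (A.mulVec v)}

/-- The `p`-shrinkage function `s_{λ,p}`. -/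
def pshrinkFun (lam p t : ℝ) : ℝ :=
  if t ≤ 0 then 0 else max (t - lam ^ (2 - p) * t ^ (p - 1)) 0

/-- `f_p(x) = ∫₀ˣ s_{λ,p}(t) dt`. -/
def pf (lam p x : ℝ) : ℝ := ∫ t in (0 : ℝ)..x, pshrinkFun lam p t

/-- Legendre–Fenchel transform `f_p*(w) = sup_{x ≥ 0} (x·w − f_p(x))`. -/
def pfstar (lam p w : ℝ) : ℝ := sSup ((fun x => x * w - pf lam p x) '' Set.Ici 0)

/-- The induced `p`-shrinkage penalty component `g_p`. -/
def gp (lam p w : ℝ) : ℝ := (pfstar lam p |w| - w ^ 2 / 2) / lam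

/-- The induced `p`-shrinkage penalty `G_p`. -/
def Gp (lam p : ℝ) {n : ℕ} (w : Fin n → ℝ) : ℝ := ∑ i, gp lam p (w i)

/-- The `p`-shrinkage mapping `S_p`. -/
def Sp (lam p : ℝ) {n : ℕ} (x : Fin n → ℝ) : Fin n → ℝ :=
  fun i => pshrinkFun lam p |x i| * Real.sign (x i)

/-- The objective `F_p(x) = λ G_p(x) + ½‖Ax − b‖₂²`. -/
def Fp (lam p : ℝ) {m n : ℕ} (A : Matrix (Fin m) (Fin n) ℝ) (b : Fin m → ℝ)
    (x : Fin n → ℝ) : ℝ :=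
  lam * Gp lam p x + (1 / 2) * (l2 (A.mulVec x - b)) ^ 2

/-- Firm-thresholding penalty component. -/
def gfirm (μ w : ℝ) : ℝ := if |w| ≤ μ then |w| - w ^ 2 / (2 * μ) else μ / 2

/-- Firm-thresholding penalty. -/
def Gfirm (μ : ℝ) {n : ℕ} (w : Fin n → ℝ) : ℝ := ∑ i, gfirm μ (w i)

/-- The `m × m` submatrix `A_S` of the columns of `A` indexed by `S`. -/
def colsub {m n : ℕ} (A : Matrix (Fin m) (Fin n) ℝ)
    (S : {S : Finset (Fin n) // S.card = m}) : Matrix (Fin m) (Fin m) ℝ :=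
  Matrix.of fun i j => A i ((S.1.orderIsoOfFin S.2 j : Fin n))

/-- `α_S = ‖A_S⁻¹ b‖_{-∞}`. -/
def alphaS {m n : ℕ} (A : Matrix (Fin m) (Fin n) ℝ) (b : Fin m → ℝ)
    (S : {S : Finset (Fin n) // S.card = m}) : ℝ :=
  ⨅ i, |((colsub A S)⁻¹).mulVec b i|

/-- `β_S = ‖A_S⁻¹ b‖_∞`. -/
def betaS {m n : ℕ} (A : Matrix (Fin m) (Fin n) ℝ) (b : Fin m → ℝ)
    (S : {S : Finset (Fin n) // S.card = m}) : ℝ :=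
  ⨆ i, |((colsub A S)⁻¹).mulVec b i|

/-- `‖A_S⁻¹‖` (spectral norm). -/
def nrmInv {m n : ℕ} (A : Matrix (Fin m) (Fin n) ℝ)
    (S : {S : Finset (Fin n) // S.card = m}) : ℝ :=
  specNorm ((colsub A S)⁻¹)

/-!
Let `s` be a monotone odd shrinkage with `s t ≤ t` for `t ≥ 0`, let `M y = ∫₀ʸ (t - s t) dt`, and
`h w = sup_y (M y - (w - y)² / 2)`. Monotonicity of `s` makes `s` the proximal map of `h`, and
`‖A‖ ≤ 1` makes the IPS step a majorize–minimize step for `E x = Σᵢ h (xᵢ) + ‖Ax - b‖² / 2`, so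
`E` decreases along the iterates and `M (xᵏᵢ) ≤ h (xᵏᵢ) ≤ E (x⁰) = ‖b‖² / 2`.
For `s = s_{λ,p}` with `p < 0`, `M` is even, increases on `[0, ∞)` and tends to
`λ²/2 - λ²/p`, which the hypothesis on `λ` puts above `‖b‖² / 2`; so `M t > ‖b‖² / 2` for some
`t`, and no coordinate of any iterate reaches `t`.
-/

open Set Topology
open scoped Matrix Matrix.Norms.L2Operator

lemma l2_eq_norm {k : ℕ} (v : Fin k → ℝ) :
    l2 v = ‖(WithLp.toLp 2 v : EuclideanSpace ℝ (Fin k))‖ := by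
  simp [l2, EuclideanSpace.norm_eq, sq_abs]

lemma specNorm_eq_l2_opNorm {m n : ℕ} (A : Matrix (Fin m) (Fin n) ℝ) : specNorm A = ‖A‖ := by
  rw [Matrix.l2_opNorm_def, ← ContinuousLinearMap.sSup_unitClosedBall_eq_norm, specNorm]
  congr 1
  ext c
  constructor
  · rintro ⟨v, hv, rfl⟩
    exact ⟨WithLp.toLp 2 v, by simpa [l2_eq_norm] using hv, by simp [l2_eq_norm]⟩
  · rintro ⟨x, hx, rfl⟩
    exact ⟨x.ofLp, by simpa [l2_eq_norm] using hx, by simp [l2_eq_norm, Matrix.toLpLin_apply]⟩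

lemma l2_mulVec_le {m n : ℕ} (A : Matrix (Fin m) (Fin n) ℝ) (v : Fin n → ℝ) :
    l2 (A *ᵥ v) ≤ specNorm A * l2 v := by
  simpa [specNorm_eq_l2_opNorm, l2_eq_norm] using A.l2_opNorm_mulVec (WithLp.toLp 2 v)

lemma l2_sq {k : ℕ} (v : Fin k → ℝ) : l2 v ^ 2 = v ⬝ᵥ v := by
  rw [l2, Real.sq_sqrt (by positivity), dotProduct]
  simp [sq]

lemma dotProduct_mulVec_self_le {m n : ℕ} {A : Matrix (Fin m) (Fin n) ℝ} (hA : specNorm A ≤ 1)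
    (v : Fin n → ℝ) : A *ᵥ v ⬝ᵥ A *ᵥ v ≤ v ⬝ᵥ v := by
  rw [← l2_sq, ← l2_sq]
  exact pow_le_pow_left₀ (Real.sqrt_nonneg _)
    ((l2_mulVec_le A v).trans (mul_le_of_le_one_left (Real.sqrt_nonneg _) hA)) 2

lemma l2_le_of_forall_abs_le {k : ℕ} {v : Fin k → ℝ} {t : ℝ} (h : ∀ i, |v i| ≤ t) :
    l2 v ≤ √(k * t ^ 2) := by
  refine Real.sqrt_le_sqrt ?_
  calc ∑ i, v i ^ 2 ≤ ∑ _i : Fin k, t ^ 2 :=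
        Finset.sum_le_sum fun i _ => sq_le_sq' (neg_le_of_abs_le (h i)) (le_of_abs_le (h i))
    _ = k * t ^ 2 := by simp

section Shrinkage

variable {s : ℝ → ℝ}

def shrinkPotential (s : ℝ → ℝ) (y : ℝ) : ℝ := ∫ t in (0 : ℝ)..y, (t - s t)

/-- With `f = ∫₀ s`, this is `sup_y (w y - f y) - w² / 2`; for `s = s_{λ,p}` it is `λ · g_p w`. -/
def shrinkPenalty (s : ℝ → ℝ) (w : ℝ) : ℝ :=
  sSup (range fun y => shrinkPotential s y - (w - y) ^ 2 / 2)

lemma Monotone.intervalIntegrable_id_sub (hs : Monotone s) (a b : ℝ) :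
    IntervalIntegrable (fun t => t - s t) volume a b :=
  intervalIntegral.intervalIntegrable_id.sub (hs.intervalIntegrable)

lemma shrinkPotential_sub (hs : Monotone s) (y z : ℝ) :
    shrinkPotential s z - shrinkPotential s y = ∫ t in y..z, (t - s t) :=
  sub_eq_of_eq_add' (intervalIntegral.integral_add_adjacent_intervals
    (hs.intervalIntegrable_id_sub 0 y) (hs.intervalIntegrable_id_sub y z)).symm

lemma shrinkPotential_sub_le (hs : Monotone s) (y z : ℝ) :
    shrinkPotential s z - shrinkPotential s y ≤ (s y - z) ^ 2 / 2 - (s y - y) ^ 2 / 2 := by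
  have hlin : ∫ t in y..z, (t - s y) = (s y - z) ^ 2 / 2 - (s y - y) ^ 2 / 2 := by
    simp only [intervalIntegral.integral_sub intervalIntegral.intervalIntegrable_id
      intervalIntegrable_const, integral_id, intervalIntegral.integral_const, smul_eq_mul]
    ring
  have hconst : IntervalIntegrable (fun t => t - s y) volume y z :=
    intervalIntegral.intervalIntegrable_id.sub intervalIntegrable_const
  rw [shrinkPotential_sub hs, ← hlin]
  rcases le_total y z with hyz | hzy
  · exact intervalIntegral.integral_mono_on hyz (hs.intervalIntegrable_id_sub y z) hconst
      fun t ht => sub_le_sub_left (hs ht.1) t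
  · rw [intervalIntegral.integral_symm z y, intervalIntegral.integral_symm z y, neg_le_neg_iff]
    exact intervalIntegral.integral_mono_on hzy hconst.symm (hs.intervalIntegrable_id_sub z y)
      fun t ht => sub_le_sub_left (hs ht.2) t

lemma shrinkPenalty_apply_le (hs : Monotone s) (y : ℝ) :
    shrinkPenalty s (s y) ≤ shrinkPotential s y - (s y - y) ^ 2 / 2 :=
  csSup_le (range_nonempty _) <| forall_mem_range.2 fun z => by
    linarith [shrinkPotential_sub_le hs y z]

lemma le_shrinkPenalty (hM : BddAbove (range (shrinkPotential s))) (w y : ℝ) :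
    shrinkPotential s y - (w - y) ^ 2 / 2 ≤ shrinkPenalty s w := by
  obtain ⟨C, hC⟩ := hM
  refine le_csSup ⟨C, forall_mem_range.2 fun z => ?_⟩ (mem_range_self y)
  linarith [hC (mem_range_self z), sq_nonneg (w - z)]

lemma shrink_prox_le (hs : Monotone s) (hM : BddAbove (range (shrinkPotential s))) (y v : ℝ) :
    (s y - y) ^ 2 / 2 + shrinkPenalty s (s y) ≤ (v - y) ^ 2 / 2 + shrinkPenalty s v := by
  linarith [shrinkPenalty_apply_le hs y, le_shrinkPenalty hM v y]

lemma shrinkPenalty_zero (hs : Monotone s) (hM : BddAbove (range (shrinkPotential s)))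
    (hs0 : s 0 = 0) : shrinkPenalty s 0 = 0 := by
  have hM0 : shrinkPotential s 0 = 0 := intervalIntegral.integral_same
  apply le_antisymm
  · simpa [hs0, hM0] using shrinkPenalty_apply_le hs 0
  · simpa [hM0] using le_shrinkPenalty hM 0 0

lemma shrinkPotential_neg (hodd : ∀ t, s (-t) = -s t) (y : ℝ) :
    shrinkPotential s (-y) = shrinkPotential s y := by
  have h := intervalIntegral.integral_comp_neg (a := 0) (b := y) (fun t => t - s t)
  simp only [hodd, neg_zero, sub_neg_eq_add, neg_add_eq_sub] at h
  rw [shrinkPotential, shrinkPotential, intervalIntegral.integral_symm (-y) 0, ← h,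
    ← intervalIntegral.integral_neg]
  congr 1; ext t; ring

lemma shrinkPotential_abs (hodd : ∀ t, s (-t) = -s t) (y : ℝ) :
    shrinkPotential s |y| = shrinkPotential s y := by
  rcases abs_choice y with h | h <;> simp only [h, shrinkPotential_neg hodd]

lemma monotoneOn_shrinkPotential (hs : Monotone s) (hle : ∀ t, 0 ≤ t → s t ≤ t) :
    MonotoneOn (shrinkPotential s) (Ici 0) := fun y hy z _ hyz => by
  rw [← sub_nonneg, shrinkPotential_sub hs]
  exact intervalIntegral.integral_nonneg hyz fun t ht =>
    sub_nonneg.2 (hle t ((mem_Ici.1 hy).trans ht.1))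

lemma shrinkPotential_nonneg (hs : Monotone s) (hle : ∀ t, 0 ≤ t → s t ≤ t)
    (hodd : ∀ t, s (-t) = -s t) (y : ℝ) : 0 ≤ shrinkPotential s y := by
  rw [← shrinkPotential_abs hodd]
  have := monotoneOn_shrinkPotential hs hle (le_refl (0 : ℝ)) (abs_nonneg y) (abs_nonneg y)
  rwa [shrinkPotential, intervalIntegral.integral_same] at this

end Shrinkage

section IterativeShrinkage

variable {s : ℝ → ℝ} {m n : ℕ}

lemma half_dotProduct_add_mulVec_le {A : Matrix (Fin m) (Fin n) ℝ}
    (hA : ∀ v, A *ᵥ v ⬝ᵥ A *ᵥ v ≤ v ⬝ᵥ v) (r : Fin m → ℝ) (d : Fin n → ℝ) :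
    (r + A *ᵥ d) ⬝ᵥ (r + A *ᵥ d) / 2 ≤ r ⬝ᵥ r / 2 + (Aᵀ *ᵥ r) ⬝ᵥ d + d ⬝ᵥ d / 2 := by
  have hadj : r ⬝ᵥ A *ᵥ d = (Aᵀ *ᵥ r) ⬝ᵥ d := by
    rw [Matrix.dotProduct_mulVec, Matrix.mulVec_transpose]
  have hexp : (r + A *ᵥ d) ⬝ᵥ (r + A *ᵥ d)
      = r ⬝ᵥ r + 2 * (r ⬝ᵥ A *ᵥ d) + A *ᵥ d ⬝ᵥ A *ᵥ d := by
    simp only [add_dotProduct, dotProduct_add, dotProduct_comm (A *ᵥ d) r]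
    ring
  linarith [hA d]

def ipsEnergy (s : ℝ → ℝ) (A : Matrix (Fin m) (Fin n) ℝ) (b : Fin m → ℝ) (x : Fin n → ℝ) : ℝ :=
  ∑ i, shrinkPenalty s (x i) + (A *ᵥ x - b) ⬝ᵥ (A *ᵥ x - b) / 2

lemma ipsEnergy_step_le (hs : Monotone s) (hM : BddAbove (range (shrinkPotential s)))
    {A : Matrix (Fin m) (Fin n) ℝ} (hA : ∀ v, A *ᵥ v ⬝ᵥ A *ᵥ v ≤ v ⬝ᵥ v) (b : Fin m → ℝ)
    (x : Fin n → ℝ) :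
    ipsEnergy s A b (fun i => s ((x - Aᵀ *ᵥ (A *ᵥ x - b)) i)) ≤ ipsEnergy s A b x := by
  set g := Aᵀ *ᵥ (A *ᵥ x - b)
  set x' : Fin n → ℝ := fun i => s ((x - g) i)
  have hprox : ∀ i, shrinkPenalty s (x' i) + (x' - x) i ^ 2 / 2 + g i * (x' - x) i
      ≤ shrinkPenalty s (x i) := fun i => by
    have h := shrink_prox_le hs hM ((x - g) i) (x i)
    simp only [x', Pi.sub_apply] at h ⊢
    linear_combination h
  have hsum := Finset.sum_le_sum fun i (_ : i ∈ Finset.univ) => hprox i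
  simp only [Finset.sum_add_distrib, ← Finset.sum_div] at hsum
  have hres : A *ᵥ x' - b = (A *ᵥ x - b) + A *ᵥ (x' - x) := by
    rw [Matrix.mulVec_sub]; abel
  have hquad : (A *ᵥ x - b + A *ᵥ (x' - x)) ⬝ᵥ (A *ᵥ x - b + A *ᵥ (x' - x)) / 2
      ≤ (A *ᵥ x - b) ⬝ᵥ (A *ᵥ x - b) / 2 + g ⬝ᵥ (x' - x) + (x' - x) ⬝ᵥ (x' - x) / 2 :=
    half_dotProduct_add_mulVec_le hA (A *ᵥ x - b) (x' - x)
  unfold ipsEnergy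
  rw [hres]
  simp only [dotProduct, sq] at hsum hquad ⊢
  linarith

lemma shrinkPotential_iterate_le (hs : Monotone s) (hle : ∀ t, 0 ≤ t → s t ≤ t)
    (hodd : ∀ t, s (-t) = -s t) (hM : BddAbove (range (shrinkPotential s)))
    {A : Matrix (Fin m) (Fin n) ℝ} (hA : ∀ v, A *ᵥ v ⬝ᵥ A *ᵥ v ≤ v ⬝ᵥ v) (b : Fin m → ℝ)
    (x : ℕ → Fin n → ℝ) (hx0 : x 0 = 0)
    (hiter : ∀ k, x (k + 1) = fun i => s ((x k - Aᵀ *ᵥ (A *ᵥ x k - b)) i)) (k : ℕ) (i : Fin n) :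
    shrinkPotential s (x k i) ≤ b ⬝ᵥ b / 2 := by
  have hs0 : s 0 = 0 := by linarith [neg_zero (G := ℝ) ▸ hodd 0]
  have henergy : ∀ k, ipsEnergy s A b (x k) ≤ b ⬝ᵥ b / 2 := by
    intro k
    induction k with
    | zero => simp [ipsEnergy, hx0, shrinkPenalty_zero hs hM hs0]
    | succ k ih => exact hiter k ▸ (ipsEnergy_step_le hs hM hA b (x k)).trans ih
  have hpen_nonneg : ∀ w, 0 ≤ shrinkPenalty s w := fun w =>
    (shrinkPotential_nonneg hs hle hodd w).trans (by simpa using le_shrinkPenalty hM w w)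
  calc shrinkPotential s (x k i) ≤ shrinkPenalty s (x k i) := by
        simpa using le_shrinkPenalty hM (x k i) (x k i)
    _ ≤ ∑ j, shrinkPenalty s (x k j) :=
        Finset.single_le_sum (fun j _ => hpen_nonneg (x k j)) (Finset.mem_univ i)
    _ ≤ ipsEnergy s A b (x k) := by
        have : 0 ≤ (A *ᵥ x k - b) ⬝ᵥ (A *ᵥ x k - b) := by
          simpa using dotProduct_self_star_nonneg (A *ᵥ x k - b)
        unfold ipsEnergy; linarith
    _ ≤ b ⬝ᵥ b / 2 := henergy k

end IterativeShrinkage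

section PShrinkage

variable {lam p : ℝ}

lemma pshrinkFun_nonneg (t : ℝ) : 0 ≤ pshrinkFun lam p t := by
  unfold pshrinkFun
  split_ifs
  exacts [le_rfl, le_max_right _ _]

lemma pshrinkFun_le_self (hlam : 0 ≤ lam) {t : ℝ} (ht : 0 ≤ t) : pshrinkFun lam p t ≤ t := by
  unfold pshrinkFun
  split_ifs
  · exact ht
  · exact max_le (sub_le_self _ (by positivity)) ht

lemma monotone_pshrinkFun (hlam : 0 ≤ lam) (hp : p ≤ 1) : Monotone (pshrinkFun lam p) := by
  intro a b hab
  by_cases ha : a ≤ 0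
  · simpa [pshrinkFun, ha] using pshrinkFun_nonneg b
  have ha : 0 < a := not_le.1 ha
  simp only [pshrinkFun, not_le.2 ha, not_le.2 (ha.trans_le hab), if_false]
  refine max_le_max (sub_le_sub hab (mul_le_mul_of_nonneg_left ?_ (by positivity))) le_rfl
  exact Real.rpow_le_rpow_of_nonpos ha hab (by linarith)

lemma pshrinkFun_eq_zero (hp : p ≤ 2) {t : ℝ} (ht : t ≤ lam) : pshrinkFun lam p t = 0 := by
  unfold pshrinkFun
  split_ifs with h0
  · rfl
  have ht0 : 0 < t := not_le.1 h0
  refine max_eq_right ?_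
  have hpow : t ^ (2 - p) ≤ lam ^ (2 - p) := Real.rpow_le_rpow ht0.le ht (by linarith)
  have hsplit : t ^ (2 - p) * t ^ (p - 1) = t := by rw [← Real.rpow_add ht0]; norm_num
  nlinarith [Real.rpow_pos_of_pos ht0 (p - 1)]

lemma pshrinkFun_of_ge (hlam : 0 < lam) (hp : p ≤ 2) {t : ℝ} (ht : lam ≤ t) :
    pshrinkFun lam p t = t - lam ^ (2 - p) * t ^ (p - 1) := by
  have ht0 : 0 < t := hlam.trans_le ht
  rw [pshrinkFun, if_neg (not_le.2 ht0), max_eq_left]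
  have hpow : lam ^ (2 - p) ≤ t ^ (2 - p) := Real.rpow_le_rpow hlam.le ht (by linarith)
  have hsplit : t ^ (2 - p) * t ^ (p - 1) = t := by rw [← Real.rpow_add ht0]; norm_num
  nlinarith [Real.rpow_pos_of_pos ht0 (p - 1)]

/-- The scalar form of `Sp`: `Sp lam p x i = pshrink lam p (x i)` by definition. -/
def pshrink (lam p y : ℝ) : ℝ := pshrinkFun lam p |y| * Real.sign y

lemma pshrink_of_nonneg {y : ℝ} (hy : 0 ≤ y) : pshrink lam p y = pshrinkFun lam p y := by
  rcases hy.eq_or_lt with rfl | hy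
  · simp [pshrink, pshrinkFun]
  · rw [pshrink, abs_of_pos hy, Real.sign_of_pos hy, mul_one]

lemma pshrink_neg (y : ℝ) : pshrink lam p (-y) = -pshrink lam p y := by
  simp only [pshrink, abs_neg, Real.sign_neg, mul_neg]

lemma pshrink_le_self (hlam : 0 ≤ lam) {y : ℝ} (hy : 0 ≤ y) : pshrink lam p y ≤ y :=
  pshrink_of_nonneg hy ▸ pshrinkFun_le_self hlam hy

lemma monotone_pshrink (hlam : 0 ≤ lam) (hp : p ≤ 1) : Monotone (pshrink lam p) := by
  have hmono : MonotoneOn (pshrink lam p) (Ici 0) := fun a ha b hb hab => by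
    rw [pshrink_of_nonneg ha, pshrink_of_nonneg hb]
    exact monotone_pshrinkFun hlam hp hab
  exact monotone_of_odd_of_monotoneOn_nonneg pshrink_neg hmono

lemma shrinkPotential_pshrink_of_le (hp : p ≤ 2) {y : ℝ} (hy0 : 0 ≤ y) (hy : y ≤ lam) :
    shrinkPotential (pshrink lam p) y = y ^ 2 / 2 := by
  have hEq : EqOn (fun t => t - pshrink lam p t) (fun t => t) (uIcc 0 y) := fun t ht => by
    rw [uIcc_of_le hy0] at ht
    simp [pshrink_of_nonneg ht.1, pshrinkFun_eq_zero hp (ht.2.trans hy)]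
  rw [shrinkPotential, intervalIntegral.integral_congr hEq, integral_id]
  ring

lemma shrinkPotential_pshrink_of_ge (hlam : 0 < lam) (hp0 : p ≠ 0) (hp : p ≤ 1) {y : ℝ}
    (hy : lam ≤ y) :
    shrinkPotential (pshrink lam p) y = lam ^ 2 / 2 - lam ^ 2 / p + lam ^ (2 - p) * y ^ p / p := by
  have hEq : EqOn (fun t => t - pshrink lam p t) (fun t => lam ^ (2 - p) * t ^ (p - 1))
      (uIcc lam y) := fun t ht => by
    rw [uIcc_of_le hy] at ht
    simp only [pshrink_of_nonneg (hlam.le.trans ht.1),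
      pshrinkFun_of_ge hlam (show p ≤ 2 by linarith) ht.1]
    ring
  have hint : ∫ t in lam..y, t ^ (p - 1) = (y ^ p - lam ^ p) / p := by
    rw [integral_rpow (Or.inr ⟨by contrapose! hp0; linarith, fun h0 => by
      rw [uIcc_of_le hy] at h0; linarith [h0.1]⟩)]
    simp
  have hlam_pow : lam ^ (2 - p) * lam ^ p = lam ^ 2 := by
    rw [← Real.rpow_add hlam]; norm_num
  have hsub := shrinkPotential_sub (monotone_pshrink hlam.le hp) lam y
  rw [intervalIntegral.integral_congr hEq, intervalIntegral.integral_const_mul, hint,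
    shrinkPotential_pshrink_of_le (by linarith) hlam.le le_rfl] at hsub
  rw [sub_eq_iff_eq_add'.1 hsub, mul_div_assoc', mul_sub, hlam_pow]
  ring

lemma tendsto_shrinkPotential_pshrink (hlam : 0 < lam) (hp : p < 0) :
    Tendsto (shrinkPotential (pshrink lam p)) atTop (𝓝 (lam ^ 2 / 2 - lam ^ 2 / p)) := by
  have hpow : Tendsto (fun y : ℝ => y ^ p) atTop (𝓝 0) := by
    simpa using tendsto_rpow_neg_atTop (neg_pos.2 hp)
  have hlim :=
    ((hpow.const_mul (lam ^ (2 - p))).div_const p).const_add (lam ^ 2 / 2 - lam ^ 2 / p)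
  simp only [mul_zero, zero_div, add_zero] at hlim
  refine hlim.congr' ?_
  filter_upwards [eventually_ge_atTop lam] with y hy
  rw [shrinkPotential_pshrink_of_ge hlam hp.ne (by linarith) hy]

lemma shrinkPotential_pshrink_le (hlam : 0 < lam) (hp : p < 0) (y : ℝ) :
    shrinkPotential (pshrink lam p) y ≤ lam ^ 2 / 2 - lam ^ 2 / p := by
  have hmono := monotoneOn_shrinkPotential (monotone_pshrink hlam.le (by linarith))
    fun t => pshrink_le_self (p := p) hlam.le
  rw [← shrinkPotential_abs pshrink_neg]
  exact ge_of_tendsto (tendsto_shrinkPotential_pshrink hlam hp) <|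
    (eventually_ge_atTop |y|).mono fun z hz => hmono (abs_nonneg y) ((abs_nonneg y).trans hz) hz

lemma half_lt_of_sq_gt (hp : p < 0) {β : ℝ} (h : lam ^ 2 > p * β / (p - 2)) :
    β / 2 < lam ^ 2 / 2 - lam ^ 2 / p := by
  rw [gt_iff_lt, div_lt_iff_of_neg (by linarith)] at h
  rw [div_sub_div _ _ two_ne_zero hp.ne, lt_div_iff_of_neg (by linarith)]
  nlinarith

end PShrinkage

/-- for `p < 0` with `λ² > p‖b‖₂²/(p−2)` and `x⁰ = 0`,
the IPS sequence is bounded. -/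
theorem stmt18 (lam p : ℝ) (hlam : 0 < lam) (hp : p < 0)
    {m n : ℕ} (A : Matrix (Fin m) (Fin n) ℝ) (hA : specNorm A < 1)
    (b : Fin m → ℝ)
    (hlam2 : lam ^ 2 > p * (l2 b) ^ 2 / (p - 2))
    (x : ℕ → Fin n → ℝ) (hx0 : x 0 = 0)
    (hiter : ∀ k : ℕ,
      x (k + 1) = Sp lam p (x k - A.transpose.mulVec (A.mulVec (x k) - b))) :
    (∃ R : ℝ, ∀ k : ℕ, l2 (x k) ≤ R) ∧
    ∃ t : ℝ, 0 < t ∧ ∀ k : ℕ, 1 ≤ k → ∀ i : Fin n, |x k i| < t := by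
  have hs := monotone_pshrink hlam.le (p := p) (by linarith)
  have hle : ∀ t, 0 ≤ t → pshrink lam p t ≤ t := fun t => pshrink_le_self hlam.le
  have hM : BddAbove (range (shrinkPotential (pshrink lam p))) :=
    ⟨_, forall_mem_range.2 (shrinkPotential_pshrink_le hlam hp)⟩
  have hpot := shrinkPotential_iterate_le hs hle pshrink_neg hM
    (dotProduct_mulVec_self_le hA.le) b x hx0 hiter
  have hB : b ⬝ᵥ b / 2 < lam ^ 2 / 2 - lam ^ 2 / p := half_lt_of_sq_gt hp (l2_sq b ▸ hlam2)
  obtain ⟨t, hBt, ht0⟩ := (((tendsto_shrinkPotential_pshrink hlam hp).eventually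
    (lt_mem_nhds hB)).and (eventually_gt_atTop 0)).exists
  have hbound : ∀ k i, |x k i| < t := fun k i => by
    by_contra! hti
    have hMt := monotoneOn_shrinkPotential hs hle ht0.le (ht0.le.trans hti) hti
    rw [shrinkPotential_abs pshrink_neg] at hMt
    linarith [hpot k i]
  exact ⟨⟨_, fun k => l2_le_of_forall_abs_le fun i => (hbound k i).le⟩, t, ht0,
    fun k _ i => hbound k i⟩

end
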